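/- Let a be a weak composition of length n with N=a_1+⋯+a_n, let m≥1, and let 0^m×a denote the weak composition (0,…,0,a_1,…,a_n) of length n+m. The shift map σ sending a standard filling T of D(a) to the standard filling T' of D(0^m×a) defined by T'(i+m,j)=T(i,j) restricts to a bijection SKD(a) → SKD(0^m×a) satisfying maj(T')=maj(T); moreover, if T∈SKD(a) is non-virtual, then T' is non-virtual and des(T')=0^m×des(T) (the weak composition des(T) preceded by m zero parts). -/

import Mathlib

open scoped Classical
open Finset

namespace NSMac

noncomputable section

/-- `NN n a` is the total size `a 1 + ⋯ + a n` of the weak composition `a` of length `n`. -/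
def NN (n : ℕ) (a : ℕ → ℕ) : ℕ := ∑ i ∈ Finset.Icc 1 n, a i

/-- The key diagram of a weak composition `a` of length `n`: cells `(i, j)` (row `i`,
column `j`, both 1-based, rows indexed bottom to top) with `1 ≤ i ≤ n`, `1 ≤ j ≤ a i`. -/
def keyDiagram (n : ℕ) (a : ℕ → ℕ) : Finset (ℕ × ℕ) :=
  (Finset.Icc 1 n ×ˢ Finset.Icc 1 (NN n a)).filter (fun c => c.2 ≤ a c.1)

/-- A standard filling: a bijection from the diagram onto `{1, …, N}`. -/
def IsStandardFilling (n : ℕ) (a : ℕ → ℕ) (T : ℕ × ℕ → ℕ) : Prop :=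
  Set.BijOn T (keyDiagram n a : Set (ℕ × ℕ)) (Set.Icc 1 (NN n a))

/-- Key tableau: positive entries, distinct within each column, rows weakly decreasing
left to right, and the key condition on column pairs. -/
def IsKeyTableau (n : ℕ) (a : ℕ → ℕ) (T : ℕ × ℕ → ℕ) : Prop :=
  (∀ c ∈ keyDiagram n a, 1 ≤ T c) ∧
  (∀ c ∈ keyDiagram n a, ∀ d ∈ keyDiagram n a, c.2 = d.2 → c ≠ d → T c ≠ T d) ∧
  (∀ r c : ℕ, (r, c) ∈ keyDiagram n a → (r, c + 1) ∈ keyDiagram n a →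
    T (r, c + 1) ≤ T (r, c)) ∧
  (∀ r r' c : ℕ, (r, c) ∈ keyDiagram n a → (r', c) ∈ keyDiagram n a → r' < r →
    T (r, c) < T (r', c) →
    (r', c + 1) ∈ keyDiagram n a ∧ T (r, c) < T (r', c + 1))

/-- Every entry is at most its row index. -/
def RowBounded (n : ℕ) (a : ℕ → ℕ) (T : ℕ × ℕ → ℕ) : Prop :=
  ∀ c ∈ keyDiagram n a, T c ≤ c.1

/-- The finset of fillings of the key diagram with entries in `{1, …, B}`, encoded as
finitely supported functions vanishing off the diagram. -/
def Fillings (n : ℕ) (a : ℕ → ℕ) (B : ℕ) : Finset ((ℕ × ℕ) →₀ ℕ) :=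
  (keyDiagram n a).finsupp (fun _ => Finset.Icc 1 B)

/-- Standard key tableaux `SKT(a)`. -/
def SKTset (n : ℕ) (a : ℕ → ℕ) : Finset ((ℕ × ℕ) →₀ ℕ) :=
  (Fillings n a (NN n a)).filter fun T => IsStandardFilling n a ⇑T ∧ IsKeyTableau n a ⇑T

/-- Semistandard key tableaux `SSKT(a)`. -/
def SSKTset (n : ℕ) (a : ℕ → ℕ) : Finset ((ℕ × ℕ) →₀ ℕ) :=
  (Fillings n a n).filter fun T => IsKeyTableau n a ⇑T ∧ RowBounded n a ⇑T

/-- The leg of a cell of a key diagram. -/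
def leg (a : ℕ → ℕ) (c : ℕ × ℕ) : ℕ := a c.1 + 1 - c.2

/-- `maj`: the sum of legs of cells whose entry strictly exceeds the entry to its left. -/
def maj (n : ℕ) (a : ℕ → ℕ) (T : ℕ × ℕ → ℕ) : ℕ :=
  ∑ c ∈ (keyDiagram n a).filter (fun c => 2 ≤ c.2 ∧ T (c.1, c.2 - 1) < T c), leg a c

/-- Counterclockwise cyclic orientation of a triple of entries. -/
def cyc3 (u v w : ℕ) : Prop := (u < v ∧ v < w) ∨ (v < w ∧ w < u) ∨ (w < u ∧ u < v)

/-- A Type I co-inversion triple, encoded by the pair of cells `p.1 = (r, c)` and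
`p.2 = (r', c)` with `r < r'`, `a r' < a r`; the third cell is `(r, c+1)`. -/
def IsCoinvI (n : ℕ) (a : ℕ → ℕ) (T : ℕ × ℕ → ℕ) (p : (ℕ × ℕ) × (ℕ × ℕ)) : Prop :=
  p.1.2 = p.2.2 ∧ p.1.1 < p.2.1 ∧ a p.2.1 < a p.1.1 ∧
  (p.1.1, p.1.2 + 1) ∈ keyDiagram n a ∧
  cyc3 (T p.2) (T p.1) (T (p.1.1, p.1.2 + 1))

/-- A Type II co-inversion triple, encoded by the pair of cells `p.1 = (r, c)` and
`p.2 = (r'', c+1)` with `r'' < r`, `a r'' ≤ a r`; the third cell is `(r, c+1)`. -/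
def IsCoinvII (n : ℕ) (a : ℕ → ℕ) (T : ℕ × ℕ → ℕ) (p : (ℕ × ℕ) × (ℕ × ℕ)) : Prop :=
  p.2.2 = p.1.2 + 1 ∧ p.2.1 < p.1.1 ∧ a p.2.1 ≤ a p.1.1 ∧
  (p.1.1, p.1.2 + 1) ∈ keyDiagram n a ∧
  cyc3 (T p.1) (T (p.1.1, p.1.2 + 1)) (T p.2)

/-- `coinv`: the number of co-inversion triples. -/
def coinv (n : ℕ) (a : ℕ → ℕ) (T : ℕ × ℕ → ℕ) : ℕ :=
  (((keyDiagram n a) ×ˢ (keyDiagram n a)).filter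
    (fun p => IsCoinvI n a T p ∨ IsCoinvII n a T p)).card

/-- Two cells attack each other: same column, or adjacent columns with the left cell
strictly higher. -/
def Attacks (c d : ℕ × ℕ) : Prop :=
  (c.2 = d.2 ∧ c ≠ d) ∨ (d.2 = c.2 + 1 ∧ d.1 < c.1) ∨ (c.2 = d.2 + 1 ∧ c.1 < d.1)

/-- Non-attacking filling: attacking cells get distinct entries and first-column entries
are at most their row index. -/
def IsNonAttacking (n : ℕ) (a : ℕ → ℕ) (T : ℕ × ℕ → ℕ) : Prop :=
  (∀ c ∈ keyDiagram n a, ∀ d ∈ keyDiagram n a, Attacks c d → T c ≠ T d) ∧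
  (∀ r : ℕ, (r, 1) ∈ keyDiagram n a → T (r, 1) ≤ r)

/-- Semistandard key tabloids `SSKD(a)`. -/
def SSKDset (n : ℕ) (a : ℕ → ℕ) : Finset ((ℕ × ℕ) →₀ ℕ) :=
  (Fillings n a n).filter fun T => IsNonAttacking n a ⇑T ∧ coinv n a ⇑T = 0

/-- Standard key tabloids `SKD(a)`. -/
def SKDset (n : ℕ) (a : ℕ → ℕ) : Finset ((ℕ × ℕ) →₀ ℕ) :=
  (Fillings n a (NN n a)).filter fun T => IsStandardFilling n a ⇑T ∧ coinv n a ⇑T = 0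

/-- The weight of a filling, as a finitely supported exponent vector. -/
def wtF (n : ℕ) (a : ℕ → ℕ) (T : ℕ × ℕ → ℕ) : ℕ →₀ ℕ :=
  ∑ c ∈ keyDiagram n a, Finsupp.single (T c) 1

/-- The row of the cell containing entry `i` (of a standard filling). -/
def rowOf (n : ℕ) (a : ℕ → ℕ) (T : ℕ × ℕ → ℕ) (i : ℕ) : ℕ :=
  ((keyDiagram n a).filter (fun c => T c = i)).sup (fun c => c.1)

/-- The column of the cell containing entry `i` (of a standard filling). -/
def colOf (n : ℕ) (a : ℕ → ℕ) (T : ℕ × ℕ → ℕ) (i : ℕ) : ℕ :=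
  ((keyDiagram n a).filter (fun c => T c = i)).sup (fun c => c.2)

/-- `tvalAux n a T m` is the `t`-value of the block (for the weak descent composition)
containing the entry `N - m`, computed by downward recursion from entry `N`. -/
def tvalAux (n : ℕ) (a : ℕ → ℕ) (T : ℕ × ℕ → ℕ) : ℕ → ℤ
  | 0 => if colOf n a T (NN n a) = 1 then (rowOf n a T (NN n a) : ℤ) else (n : ℤ)
  | m + 1 =>
    let i := NN n a - (m + 1)
    let prev := tvalAux n a T m
    if colOf n a T i ≤ colOf n a T (i + 1) then
      if colOf n a T i = 1 then min (rowOf n a T i : ℤ) (prev - 1) else prev - 1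
    else prev

/-- The `t`-value assigned to entry `i` of a standard filling. -/
def tval (n : ℕ) (a : ℕ → ℕ) (T : ℕ × ℕ → ℕ) (i : ℕ) : ℤ := tvalAux n a T (NN n a - i)

/-- The weak descent composition of a standard filling: `none` when the filling is
virtual, otherwise the weak composition of length `n` recording block sizes at rows. -/
def desOpt (n : ℕ) (a : ℕ → ℕ) (T : ℕ × ℕ → ℕ) : Option (ℕ → ℕ) :=
  if ∀ i ∈ Finset.Icc 1 (NN n a), 1 ≤ tval n a T i then
    some (fun r => ((Finset.Icc 1 (NN n a)).filter (fun i => tval n a T i = (r : ℤ))).card)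
  else none

/-- `flat n a`: the strong composition obtained from `(a 1, …, a n)` by deleting zeros. -/
def flat (n : ℕ) (a : ℕ → ℕ) : List ℕ :=
  ((List.range n).map (fun i => a (i + 1))).filter (fun x => x ≠ 0)

/-- `Refines β α`: `β` is obtained by splitting the parts of `α` into consecutive
(nonempty) chunks. -/
def Refines (β α : List ℕ) : Prop :=
  ∃ L : List (List ℕ), L.flatten = β ∧ L.map List.sum = α ∧ [] ∉ L

/-- `Dominates n b a`: `b ≥ a` in prefix-sum order, i.e. `b₁ + ⋯ + b_k ≥ a₁ + ⋯ + a_k`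
for all `k = 1, …, n`. -/
def Dominates (n : ℕ) (b a : ℕ → ℕ) : Prop :=
  ∀ k, 1 ≤ k → k ≤ n → ∑ i ∈ Finset.Icc 1 k, a i ≤ ∑ i ∈ Finset.Icc 1 k, b i

/-- The fundamental slide polynomial `𝔉_a(x₁, …, x_n)`, with coefficients in `ℤ[q]`. -/
def Slide (n : ℕ) (a : ℕ → ℕ) : MvPolynomial ℕ (Polynomial ℤ) :=
  ∑ b ∈ ((Finset.Icc 1 n).finsuppAntidiag (NN n a)).filter
      (fun b : ℕ →₀ ℕ => Dominates n ⇑b a ∧ Refines (flat n ⇑b) (flat n a)),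
    MvPolynomial.monomial b 1

/-- `𝔉` extended by `𝔉_∅ = 0`. -/
def SlideOpt (n : ℕ) : Option (ℕ → ℕ) → MvPolynomial ℕ (Polynomial ℤ)
  | none => 0
  | some b => Slide n b

/-- The key polynomial (type A Demazure character) `κ_a = Σ_{T ∈ SKT(a)} 𝔉_{des T}`. -/
def kappa (n : ℕ) (a : ℕ → ℕ) : MvPolynomial ℕ (Polynomial ℤ) :=
  ∑ T ∈ SKTset n a, SlideOpt n (desOpt n a ⇑T)

/-- The specialized nonsymmetric Macdonald polynomial
`E_a(X; q, 0) = Σ_{T ∈ SSKD(a)} q^{maj T} x^{wt T}` in `ℤ[q][x]`. -/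
def Epoly (n : ℕ) (a : ℕ → ℕ) : MvPolynomial ℕ (Polynomial ℤ) :=
  ∑ T ∈ SSKDset n a, MvPolynomial.monomial (wtF n a ⇑T) (Polynomial.X ^ maj n a ⇑T)

/-- Standardization: the new label of cell `c` is the number of cells `d` whose entry is
smaller, or equal with `d` weakly to the right (so equal entries are relabeled right to
left, processing entry values in increasing order). -/
def stdize (n : ℕ) (a : ℕ → ℕ) (T : ℕ × ℕ → ℕ) : ℕ × ℕ → ℕ := fun c =>
  ((keyDiagram n a).filter (fun d => T d < T c ∨ (T d = T c ∧ c.2 ≤ d.2))).card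

/-- Standardization, packaged as a finitely supported filling. -/
def stdF (n : ℕ) (a : ℕ → ℕ) (T : ℕ × ℕ → ℕ) : (ℕ × ℕ) →₀ ℕ :=
  ∑ c ∈ keyDiagram n a, Finsupp.single c (stdize n a T c)

/-- Column reading order: columns left to right, each column bottom to top. -/
def colLt (c d : ℕ × ℕ) : Prop := c.2 < d.2 ∨ (c.2 = d.2 ∧ c.1 < d.1)

/-- The cell of a standard filling containing entry `i`. -/
def cellOf (n : ℕ) (a : ℕ → ℕ) (T : ℕ × ℕ → ℕ) (i : ℕ) : ℕ × ℕ :=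
  (rowOf n a T i, colOf n a T i)

/-- Exchange the values `u` and `v`. -/
def swapVals (u v : ℕ) : ℕ → ℕ := fun m => if m = u then v else if m = v then u else m

/-- The cyclic relabeling `i-1 ↦ i ↦ i+1 ↦ i-1` of values. -/
def rho1 (i : ℕ) : ℕ → ℕ := fun m =>
  if m = i - 1 then i else if m = i then i + 1 else if m = i + 1 then i - 1 else m

/-- The cyclic relabeling `i-1 ↦ i+1 ↦ i ↦ i-1` of values. -/
def rho2 (i : ℕ) : ℕ → ℕ := fun m =>
  if m = i - 1 then i + 1 else if m = i then i - 1 else if m = i + 1 then i else m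

/-- The weak dual equivalence involution `ψ_i` on standard fillings. Letting `b, c, d` be
the cells of `i-1, i, i+1` in column reading order: `ψ_i(T) = T` if `c` contains `i`;
else `𝔟_i(T)` if `b, d` are attacking or row-adjacent (the nontrivial cycling of
`i-1, i, i+1` for which `c` does not receive `i`); else exchange `i-1, i` if `c`
contains `i+1`, and exchange `i, i+1` if `c` contains `i-1`. -/
def psi (n : ℕ) (a : ℕ → ℕ) (i : ℕ) (T : ℕ × ℕ → ℕ) : ℕ × ℕ → ℕ :=
  let x := cellOf n a T (i - 1)
  let y := cellOf n a T i
  let z := cellOf n a T (i + 1)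
  if (colLt x y ∧ colLt y z) ∨ (colLt z y ∧ colLt y x) then T
  else
    let xIsMid : Prop := (colLt y x ∧ colLt x z) ∨ (colLt z x ∧ colLt x y)
    let other : ℕ × ℕ := if xIsMid then z else x
    if Attacks y other ∨ (y.1 = other.1 ∧ (y.2 = other.2 + 1 ∨ other.2 = y.2 + 1)) then
      if xIsMid then rho2 i ∘ T else rho1 i ∘ T
    else if xIsMid then swapVals i (i + 1) ∘ T
    else swapVals (i - 1) i ∘ T

/-- `ψ`-relatedness on standard key tabloids: some `ψ_i` with `1 < i < N` maps one to
the other. -/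
def psiRel (n : ℕ) (a : ℕ → ℕ) (S T : (ℕ × ℕ) →₀ ℕ) : Prop :=
  S ∈ SKDset n a ∧ T ∈ SKDset n a ∧
    ∃ i, 1 < i ∧ i < NN n a ∧ psi n a i ⇑S = ⇑T

/-- `μ` (given by parts `μ 1 ≥ ⋯ ≥ μ ℓ > 0`) is a partition with `ℓ` parts. -/
def IsPartition (ℓ : ℕ) (μ : ℕ → ℕ) : Prop :=
  (∀ i, 1 ≤ i → i ≤ ℓ → 1 ≤ μ i) ∧ (∀ i j, 1 ≤ i → i ≤ j → j ≤ ℓ → μ j ≤ μ i)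

/-- The leg of a cell of a Young diagram: the number of cells weakly above it in its
column. -/
def legY (ℓ : ℕ) (μ : ℕ → ℕ) (c : ℕ × ℕ) : ℕ :=
  ((Finset.Icc c.1 ℓ).filter (fun i => c.2 ≤ μ i)).card

/-- `comaj` of a filling of a Young diagram. -/
def comajY (ℓ : ℕ) (μ : ℕ → ℕ) (T : ℕ × ℕ → ℕ) : ℕ :=
  ∑ c ∈ (keyDiagram ℓ μ).filter (fun c => 2 ≤ c.1 ∧ T c ≤ T (c.1 - 1, c.2)), legY ℓ μ c

/-- An inversion triple of a Young diagram, encoded by the pair of cells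
`p.1 = (r, c)`, `p.2 = (r, c')` with `c < c'`; for `r > 1` the third cell is `(r-1, c)`. -/
def IsInvPair (ℓ : ℕ) (μ : ℕ → ℕ) (T : ℕ × ℕ → ℕ) (p : (ℕ × ℕ) × (ℕ × ℕ)) : Prop :=
  p.1.1 = p.2.1 ∧ p.1.2 < p.2.2 ∧
  (if p.1.1 = 1 then T p.2 < T p.1
   else cyc3 (T p.2) (T p.1) (T (p.1.1 - 1, p.1.2)))

/-- `inv` of a filling of a Young diagram. -/
def invY (ℓ : ℕ) (μ : ℕ → ℕ) (T : ℕ × ℕ → ℕ) : ℕ :=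
  (((keyDiagram ℓ μ) ×ˢ (keyDiagram ℓ μ)).filter (fun p => IsInvPair ℓ μ T p)).card

/-- Standard Young tableau: standard filling with rows increasing left to right and
columns increasing bottom to top. -/
def IsSYT (ℓ : ℕ) (μ : ℕ → ℕ) (T : ℕ × ℕ → ℕ) : Prop :=
  IsStandardFilling ℓ μ T ∧
  (∀ r c : ℕ, (r, c) ∈ keyDiagram ℓ μ → (r, c + 1) ∈ keyDiagram ℓ μ →
    T (r, c) < T (r, c + 1)) ∧
  (∀ r c : ℕ, (r, c) ∈ keyDiagram ℓ μ → (r + 1, c) ∈ keyDiagram ℓ μ →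
    T (r, c) < T (r + 1, c))

/-- Standard Young tabloids `SYD(μ)`. -/
def SYDset (ℓ : ℕ) (μ : ℕ → ℕ) : Finset ((ℕ × ℕ) →₀ ℕ) :=
  (Fillings ℓ μ (NN ℓ μ)).filter fun T => IsStandardFilling ℓ μ ⇑T ∧ invY ℓ μ ⇑T = 0

/-- The length of column `j` of the key diagram of `a`. -/
def lam (n : ℕ) (a : ℕ → ℕ) (j : ℕ) : ℕ :=
  ((Finset.Icc 1 n).filter (fun i => j ≤ a i)).card

/-- The weak composition `0^m × a`. -/
def shiftComp (m : ℕ) (a : ℕ → ℕ) : ℕ → ℕ := fun i => if i ≤ m then 0 else a (i - m)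

/-- The shift of a filling: move row `i` to row `i + m`. -/
def shiftF (n : ℕ) (a : ℕ → ℕ) (m : ℕ) (T : ℕ × ℕ → ℕ) : (ℕ × ℕ) →₀ ℕ :=
  ∑ c ∈ keyDiagram n a, Finsupp.single (c.1 + m, c.2) (T c)

end

end NSMac

/-! Shifting by `m` rows is the embedding `(r, c) ↦ (r + m, c)`; it maps the key diagram of `a`
onto that of `0^m × a` and preserves columns, the order of rows and row lengths. Co-inversion
triples, `maj` and the block structure of `des` only see these data; the one exception is the
row of a block leader, which grows by `m`, so every `t`-value grows by `m` as well. -/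

namespace NSMac

variable {n m : ℕ} {a : ℕ → ℕ}

def shiftEmb (m : ℕ) : ℕ × ℕ ↪ ℕ × ℕ :=
  ⟨fun c => (c.1 + m, c.2), fun c d h => by simpa [Prod.ext_iff] using h⟩

@[simp] lemma shiftEmb_apply (c : ℕ × ℕ) : shiftEmb m c = (c.1 + m, c.2) := rfl

lemma shiftComp_add {i : ℕ} (hi : 1 ≤ i) : shiftComp m a (i + m) = a i := by
  simp only [shiftComp, Nat.add_sub_cancel]
  rw [if_neg (by omega)]

lemma NN_shiftComp : NN (n + m) (shiftComp m a) = NN n a := by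
  have hIcc : ∀ k, Finset.Icc 1 k = Finset.Ioc 0 k := fun _ => rfl
  have hshift : Finset.Ioc m (n + m) = (Finset.Ioc 0 n).map (addRightEmbedding m) := by simp
  rw [NN, NN, hIcc, hIcc, ← Finset.sum_Ioc_consecutive _ (Nat.zero_le m) (by omega), hshift,
    Finset.sum_map, Finset.sum_eq_zero fun i hi => by simp [shiftComp, (Finset.mem_Ioc.mp hi).2],
    zero_add]
  exact Finset.sum_congr rfl fun i hi => shiftComp_add (Finset.mem_Ioc.mp hi).1

lemma mem_keyDiagram {c : ℕ × ℕ} :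
    c ∈ keyDiagram n a ↔ 1 ≤ c.1 ∧ c.1 ≤ n ∧ 1 ≤ c.2 ∧ c.2 ≤ a c.1 := by
  simp only [keyDiagram, Finset.mem_filter, Finset.mem_product, Finset.mem_Icc]
  constructor
  · rintro ⟨⟨⟨h1, h2⟩, h3, -⟩, h4⟩
    exact ⟨h1, h2, h3, h4⟩
  · rintro ⟨h1, h2, h3, h4⟩
    have : a c.1 ≤ NN n a :=
      Finset.single_le_sum (fun _ _ => Nat.zero_le _) (Finset.mem_Icc.mpr ⟨h1, h2⟩)
    exact ⟨⟨⟨h1, h2⟩, h3, h4.trans this⟩, h4⟩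

lemma add_mem_keyDiagram_shiftComp {r c : ℕ} :
    (r + m, c) ∈ keyDiagram (n + m) (shiftComp m a) ↔ (r, c) ∈ keyDiagram n a := by
  simp only [mem_keyDiagram, shiftComp, Nat.add_sub_cancel]
  split_ifs <;> omega

lemma keyDiagram_shiftComp :
    keyDiagram (n + m) (shiftComp m a) = (keyDiagram n a).map (shiftEmb m) := by
  ext ⟨r, c⟩
  simp only [Finset.mem_map, shiftEmb_apply]
  constructor
  · intro h
    have hr : m < r := by
      have := mem_keyDiagram.mp h
      simp only [shiftComp] at this
      split_ifs at this <;> omega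
    refine ⟨(r - m, c), ?_, by simp; omega⟩
    rw [← add_mem_keyDiagram_shiftComp, Nat.sub_add_cancel hr.le]
    exact h
  · rintro ⟨⟨r', c'⟩, h, he⟩
    simp only [Prod.mk.injEq] at he
    rw [← he.1, ← he.2]
    exact add_mem_keyDiagram_shiftComp.mpr h

section ShiftedFilling

variable {S T : ℕ × ℕ → ℕ}

lemma maj_shiftComp (hST : ∀ r c, S (r + m, c) = T (r, c)) :
    maj (n + m) (shiftComp m a) S = maj n a T := by
  rw [maj, maj, keyDiagram_shiftComp, Finset.filter_map, Finset.sum_map]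
  refine Finset.sum_congr (Finset.filter_congr fun c _ => ?_) fun c hc => ?_
  · simp [hST]
  · simp only [Finset.mem_filter] at hc
    simp [leg, shiftComp_add (mem_keyDiagram.mp hc.1).1]

lemma coinv_shiftComp (hST : ∀ r c, S (r + m, c) = T (r, c)) :
    coinv (n + m) (shiftComp m a) S = coinv n a T := by
  rw [coinv, coinv, keyDiagram_shiftComp, ← Finset.prodMap_map_product, Finset.filter_map,
    Finset.card_map]
  refine congrArg Finset.card (Finset.filter_congr ?_)
  rintro ⟨⟨r, c⟩, ⟨r', c'⟩⟩ hp
  obtain ⟨hr, hr'⟩ : 1 ≤ r ∧ 1 ≤ r' := by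
    simp only [Finset.mem_product] at hp
    exact ⟨(mem_keyDiagram.mp hp.1).1, (mem_keyDiagram.mp hp.2).1⟩
  simp [IsCoinvI, IsCoinvII, hST, shiftComp_add hr, shiftComp_add hr',
    add_mem_keyDiagram_shiftComp]

lemma isStandardFilling_shiftComp_iff (hST : ∀ r c, S (r + m, c) = T (r, c)) :
    IsStandardFilling (n + m) (shiftComp m a) S ↔ IsStandardFilling n a T := by
  have hcomp : S ∘ shiftEmb m = T := funext fun c => hST c.1 c.2
  rw [IsStandardFilling, IsStandardFilling, NN_shiftComp, keyDiagram_shiftComp, Finset.coe_map,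
    ← Set.bijOn_comp_iff (shiftEmb m).injective.injOn, hcomp]

lemma colOf_shiftComp (hST : ∀ r c, S (r + m, c) = T (r, c)) (i : ℕ) :
    colOf (n + m) (shiftComp m a) S i = colOf n a T i := by
  rw [colOf, colOf, keyDiagram_shiftComp, Finset.filter_map, Finset.sup_map]
  exact Finset.sup_congr (Finset.filter_congr fun c _ => by simp [hST]) fun _ _ => rfl

lemma rowOf_shiftComp (hST : ∀ r c, S (r + m, c) = T (r, c)) {i : ℕ}
    (hi : ∃ c ∈ keyDiagram n a, T c = i) :
    rowOf (n + m) (shiftComp m a) S i = rowOf n a T i + m := by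
  have hne : ((keyDiagram n a).filter fun c => T c = i).Nonempty := by
    obtain ⟨c, hc, hci⟩ := hi
    exact ⟨c, Finset.mem_filter.mpr ⟨hc, hci⟩⟩
  rw [rowOf, rowOf, keyDiagram_shiftComp, Finset.filter_map, Finset.sup_map, Finset.sup_add hne]
  exact Finset.sup_congr (Finset.filter_congr fun c _ => by simp [hST]) fun _ _ => rfl

lemma tvalAux_shiftComp (hST : ∀ r c, S (r + m, c) = T (r, c))
    (hT : Set.SurjOn T ↑(keyDiagram n a) (Set.Icc 1 (NN n a))) {k : ℕ} (hk : k < NN n a) :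
    tvalAux (n + m) (shiftComp m a) S k = tvalAux n a T k + m := by
  have hrow : ∀ i ∈ Set.Icc 1 (NN n a), rowOf (n + m) (shiftComp m a) S i = rowOf n a T i + m :=
    fun i hi => by
      obtain ⟨c, hc, hci⟩ := hT hi
      exact rowOf_shiftComp hST ⟨c, hc, hci⟩
  induction k with
  | zero =>
    simp only [tvalAux]
    rw [NN_shiftComp, colOf_shiftComp hST, hrow _ ⟨hk, le_rfl⟩]
    split_ifs <;> push_cast <;> ring
  | succ k ih =>
    simp only [tvalAux]
    rw [NN_shiftComp, colOf_shiftComp hST, colOf_shiftComp hST, hrow _ ⟨by omega, by omega⟩,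
      ih (by omega)]
    split_ifs <;> omega

lemma tval_shiftComp (hST : ∀ r c, S (r + m, c) = T (r, c))
    (hT : Set.SurjOn T ↑(keyDiagram n a) (Set.Icc 1 (NN n a))) {i : ℕ}
    (hi : i ∈ Finset.Icc 1 (NN n a)) :
    tval (n + m) (shiftComp m a) S i = tval n a T i + m := by
  have hi := Finset.mem_Icc.mp hi
  rw [tval, tval, NN_shiftComp, tvalAux_shiftComp hST hT (by omega)]

lemma desOpt_shiftComp (hST : ∀ r c, S (r + m, c) = T (r, c))
    (hT : Set.SurjOn T ↑(keyDiagram n a) (Set.Icc 1 (NN n a))) {ds : ℕ → ℕ}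
    (hds : desOpt n a T = some ds) :
    desOpt (n + m) (shiftComp m a) S = some fun r => if r ≤ m then 0 else ds (r - m) := by
  rw [desOpt] at hds
  split_ifs at hds with hpos
  obtain rfl := Option.some.inj hds
  have htval := fun i hi => tval_shiftComp hST hT (i := i) hi
  rw [desOpt, NN_shiftComp, if_pos fun i hi => by have := hpos i hi; rw [htval i hi]; omega]
  congr 1
  funext r
  split_ifs with hr
  · refine Finset.card_eq_zero.mpr (Finset.filter_eq_empty_iff.mpr fun i hi => ?_)
    have := hpos i hi
    rw [htval i hi]
    omega
  · refine congrArg Finset.card (Finset.filter_congr fun i hi => ?_)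
    rw [htval i hi]
    omega

end ShiftedFilling

lemma shiftF_eq_embDomain {T : (ℕ × ℕ) →₀ ℕ} (hT : T.support ⊆ keyDiagram n a) :
    shiftF n a m ⇑T = T.embDomain (shiftEmb m) := by
  rw [Finsupp.embDomain_eq_mapDomain, Finsupp.mapDomain,
    Finsupp.sum_of_support_subset T hT _ fun _ _ => Finsupp.single_zero _]
  rfl

lemma embDomain_shiftEmb_mem_Fillings_iff {T : (ℕ × ℕ) →₀ ℕ} {B : ℕ} :
    T.embDomain (shiftEmb m) ∈ Fillings (n + m) (shiftComp m a) B ↔ T ∈ Fillings n a B := by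
  simp only [Fillings, Finset.mem_finsupp_iff, Finsupp.support_embDomain, keyDiagram_shiftComp,
    Finset.map_subset_map, Finset.forall_mem_map, Finsupp.embDomain_apply_self]

lemma embDomain_shiftEmb_apply_add (T : (ℕ × ℕ) →₀ ℕ) (r c : ℕ) :
    T.embDomain (shiftEmb m) (r + m, c) = T (r, c) :=
  Finsupp.embDomain_apply_self _ _ (r, c)

lemma embDomain_shiftEmb_mem_SKDset_iff {T : (ℕ × ℕ) →₀ ℕ} :
    T.embDomain (shiftEmb m) ∈ SKDset (n + m) (shiftComp m a) ↔ T ∈ SKDset n a := by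
  have hST := embDomain_shiftEmb_apply_add (m := m) T
  rw [SKDset, SKDset, Finset.mem_filter, Finset.mem_filter, NN_shiftComp,
    embDomain_shiftEmb_mem_Fillings_iff, isStandardFilling_shiftComp_iff hST, coinv_shiftComp hST]

lemma support_subset_of_mem_Fillings {T : (ℕ × ℕ) →₀ ℕ} {B : ℕ}
    (hT : T ∈ Fillings n a B) : T.support ⊆ keyDiagram n a :=
  (Finset.mem_finsupp_iff.mp hT).1

lemma exists_embDomain_shiftEmb_eq {S : (ℕ × ℕ) →₀ ℕ}
    (hS : S.support ⊆ keyDiagram (n + m) (shiftComp m a)) :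
    ∃ T : (ℕ × ℕ) →₀ ℕ, T.embDomain (shiftEmb m) = S := by
  refine ⟨S.comapDomain (shiftEmb m) (shiftEmb m).injective.injOn, Finsupp.ext fun c => ?_⟩
  by_cases hc : c ∈ Set.range (shiftEmb m)
  · obtain ⟨d, rfl⟩ := hc
    rw [Finsupp.embDomain_apply_self, Finsupp.comapDomain_apply]
  · rw [Finsupp.embDomain_of_notMem_range _ _ _ hc, eq_comm, ← Finsupp.notMem_support_iff]
    intro hcS
    obtain ⟨d, -, rfl⟩ := Finset.mem_map.mp (keyDiagram_shiftComp ▸ hS hcS)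
    exact hc ⟨d, rfl⟩

lemma bijOn_embDomain_shiftEmb :
    Set.BijOn (Finsupp.embDomain (shiftEmb m))
      (SKDset n a : Set ((ℕ × ℕ) →₀ ℕ)) (SKDset (n + m) (shiftComp m a)) := by
  refine ⟨fun T hT => embDomain_shiftEmb_mem_SKDset_iff.mpr hT,
    (Finsupp.embDomain_injective _).injOn, fun S hS => ?_⟩
  obtain ⟨T, rfl⟩ :=
    exists_embDomain_shiftEmb_eq (support_subset_of_mem_Fillings (Finset.mem_filter.mp hS).1)
  exact ⟨T, embDomain_shiftEmb_mem_SKDset_iff.mp hS, rfl⟩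

end NSMac

theorem NSMac.shift_stability_general (n : ℕ) (a : ℕ → ℕ) (m : ℕ) :
    Set.BijOn (fun T : (ℕ × ℕ) →₀ ℕ => shiftF n a m ⇑T)
      ↑(SKDset n a) ↑(SKDset (n + m) (shiftComp m a)) ∧
    ∀ T ∈ SKDset n a,
      maj (n + m) (shiftComp m a) ⇑(shiftF n a m ⇑T) = maj n a ⇑T ∧
      ∀ ds, desOpt n a ⇑T = some ds →
        desOpt (n + m) (shiftComp m a) ⇑(shiftF n a m ⇑T)
          = some (fun r => if r ≤ m then 0 else ds (r - m)) := by
  have hshift : ∀ T ∈ SKDset n a, shiftF n a m ⇑T = T.embDomain (shiftEmb m) :=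
    fun T hT => shiftF_eq_embDomain (support_subset_of_mem_Fillings (Finset.mem_filter.mp hT).1)
  refine ⟨bijOn_embDomain_shiftEmb.congr fun T hT => (hshift T hT).symm, fun T hT => ?_⟩
  have hST := embDomain_shiftEmb_apply_add (m := m) T
  rw [hshift T hT]
  exact ⟨maj_shiftComp hST,
    fun _ => desOpt_shiftComp hST (Finset.mem_filter.mp hT).2.1.surjOn⟩

/-- the shift map is a bijection `SKD(a) → SKD(0^m × a)` preserving `maj`
and shifting weak descent compositions by `m` zero parts. -/
theorem NSMac.shift_stability (n : ℕ) (a : ℕ → ℕ) (m : ℕ) (hm : 1 ≤ m) :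
    Set.BijOn (fun T : (ℕ × ℕ) →₀ ℕ => shiftF n a m ⇑T)
      ↑(SKDset n a) ↑(SKDset (n + m) (shiftComp m a)) ∧
    ∀ T ∈ SKDset n a,
      maj (n + m) (shiftComp m a) ⇑(shiftF n a m ⇑T) = maj n a ⇑T ∧
      ∀ ds, desOpt n a ⇑T = some ds →
        desOpt (n + m) (shiftComp m a) ⇑(shiftF n a m ⇑T)
          = some (fun r => if r ≤ m then 0 else ds (r - m)) :=
  NSMac.shift_stability_general n a m
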